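/- Let $M$ be a finitely generated module over a commutative ring $R$ generated by $k$ elements, and suppose $M$ admits a surjection onto $R^k$. Then $M \cong R^k$. -/
import Mathlib


/-- If M is generated by k elements and surjects onto R^k, then M ≅ R^k. -/
theorem free_of_kGen_surjects_onto_free {R : Type*} [CommRing R]
    {M : Type*} [AddCommGroup M] [Module R M] (k : ℕ)
    (f : (Fin k → R) →ₗ[R] M) (hf : Function.Surjective f)
    (g : M →ₗ[R] (Fin k → R)) (hg : Function.Surjective g) :
    Nonempty (M ≃ₗ[R] (Fin k → R)) := by
  have hgf : Function.Surjective (g ∘ₗ f) := hg.comp hf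
  have hinj : Function.Injective (g ∘ₗ f) :=
    OrzechProperty.injective_of_surjective_endomorphism (g ∘ₗ f) hgf
  have hginj : Function.Injective g := by
    intro x y hxy
    obtain ⟨a, rfl⟩ := hf x
    obtain ⟨b, rfl⟩ := hf y
    exact congrArg f (hinj hxy)
  exact ⟨LinearEquiv.ofBijective g ⟨hginj, hg⟩⟩
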